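/- If ρ is a two-qubit density matrix such that for every 4×4 unitary matrix U the transformed matrix U ρ U† satisfies the zero-discord block condition, then ρ = (1/4)·I₄. (The only two-qubit state whose quantum discord vanishes absolutely, i.e. after every global unitary transformation, is the maximally mixed state.) -/

import Mathlib

/-!
Absolute zero discord is invariant under unitary conjugation, so by the spectral theorem it
suffices to treat a diagonal state `diag d`. Conjugating it by the rotation mixing `|00⟩` and
`|11⟩` makes the `(0,1)` block strictly upper triangular with corner `(12/25) (d₁₁ - d₀₀)`, and a
normal nilpotent matrix vanishes, so `d₀₀ = d₁₁`. Permutation matrices are unitary and permute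
the diagonal, so every eigenvalue equals `d₀₀`; the trace condition then forces `ρ = 1/4`.
-/

open Matrix
open scoped Kronecker ComplexOrder

def IsDensityMatrix {n : Type*} [Fintype n] [DecidableEq n] (ρ : Matrix n n ℂ) : Prop :=
  ρ.PosSemidef ∧ ρ.trace = 1

def qblock (M : Matrix (Fin 2 × Fin 2) (Fin 2 × Fin 2) ℂ) (a b : Fin 2) :
    Matrix (Fin 2) (Fin 2) ℂ :=
  fun e f => M (a, e) (b, f)

def ZeroDiscordBlockCondition (M : Matrix (Fin 2 × Fin 2) (Fin 2 × Fin 2) ℂ) : Prop :=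
  (∀ a b : Fin 2, qblock M a b * (qblock M a b)ᴴ = (qblock M a b)ᴴ * qblock M a b) ∧
  (∀ a b a' b' : Fin 2, qblock M a b * qblock M a' b' = qblock M a' b' * qblock M a b)

namespace Matrix

variable {n R : Type*} [Fintype n] [DecidableEq n]

theorem permMatrix_mem_unitaryGroup [CommRing R] [StarRing R] (σ : Equiv.Perm n) :
    σ.permMatrix R ∈ unitaryGroup n R := by
  rw [mem_unitaryGroup_iff', star_eq_conjTranspose, conjTranspose_permMatrix, ← permMatrix_mul,
    mul_inv_cancel, permMatrix_one]

theorem permMatrix_mul_diagonal_mul_conjTranspose [NonAssocSemiring R] [StarRing R]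
    (σ : Equiv.Perm n) (d : n → R) :
    σ.permMatrix R * diagonal d * (σ.permMatrix R)ᴴ = diagonal (d ∘ σ) := by
  rw [conjTranspose_permMatrix, PEquiv.toMatrix_toPEquiv_mul, PEquiv.mul_toMatrix_toPEquiv,
    Equiv.Perm.inv_def, Equiv.symm_symm]
  exact submatrix_diagonal_equiv d σ

end Matrix

def AbsolutelyZeroDiscord (ρ : Matrix (Fin 2 × Fin 2) (Fin 2 × Fin 2) ℂ) : Prop :=
  ∀ U ∈ unitaryGroup (Fin 2 × Fin 2) ℂ, ZeroDiscordBlockCondition (U * ρ * Uᴴ)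

theorem AbsolutelyZeroDiscord.unitary_conj {ρ U : Matrix (Fin 2 × Fin 2) (Fin 2 × Fin 2) ℂ}
    (h : AbsolutelyZeroDiscord ρ) (hU : U ∈ unitaryGroup (Fin 2 × Fin 2) ℂ) :
    AbsolutelyZeroDiscord (U * ρ * Uᴴ) := by
  intro W hW
  simpa only [conjTranspose_mul, Matrix.mul_assoc] using h (W * U) (mul_mem hW hU)

theorem AbsolutelyZeroDiscord.diagonal_comp_perm {d : Fin 2 × Fin 2 → ℂ}
    (h : AbsolutelyZeroDiscord (diagonal d)) (σ : Equiv.Perm (Fin 2 × Fin 2)) :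
    AbsolutelyZeroDiscord (diagonal (d ∘ σ)) := by
  rw [← permMatrix_mul_diagonal_mul_conjTranspose]
  exact h.unitary_conj (permMatrix_mem_unitaryGroup σ)

/-- The rotation with `cos θ = 3/5`, `sin θ = 4/5` in the plane of `|00⟩` and `|11⟩`; the
Pythagorean angle keeps all entries rational. -/
noncomputable def entanglingRotation : Matrix (Fin 2 × Fin 2) (Fin 2 × Fin 2) ℂ :=
  of fun i j =>
    if i = (0, 0) ∧ j = (0, 0) ∨ i = (1, 1) ∧ j = (1, 1) then 3 / 5
    else if i = (0, 0) ∧ j = (1, 1) then 4 / 5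
    else if i = (1, 1) ∧ j = (0, 0) then -(4 / 5)
    else if i = j then 1 else 0

theorem entanglingRotation_mem_unitaryGroup :
    entanglingRotation ∈ unitaryGroup (Fin 2 × Fin 2) ℂ := by
  rw [mem_unitaryGroup_iff]
  ext i j
  fin_cases i <;> fin_cases j <;>
    simp [entanglingRotation, mul_apply, Fintype.sum_prod_type, one_apply, Complex.conj_ofNat] <;>
    norm_num

theorem eq_zero_of_strictUpper_normal {x : ℂ}
    (h : !![0, x; 0, 0] * !![0, x; 0, 0]ᴴ = !![0, x; 0, 0]ᴴ * !![0, x; 0, 0]) : x = 0 := by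
  simpa [mul_apply, Fin.sum_univ_two] using congrFun (congrFun h 0) 0

theorem qblock_zero_one_entanglingRotation_conj_diagonal (d : Fin 2 × Fin 2 → ℂ) :
    qblock (entanglingRotation * diagonal d * entanglingRotationᴴ) 0 1 =
      !![0, 12 / 25 * (d (1, 1) - d (0, 0)); 0, 0] := by
  ext e f
  fin_cases e <;> fin_cases f <;>
    simp [qblock, entanglingRotation, mul_apply, Fintype.sum_prod_type, Complex.conj_ofNat]
  ring

theorem AbsolutelyZeroDiscord.diagonal_apply_eq {d : Fin 2 × Fin 2 → ℂ}
    (h : AbsolutelyZeroDiscord (diagonal d)) : d (0, 0) = d (1, 1) := by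
  have hnormal := (h _ entanglingRotation_mem_unitaryGroup).1 0 1
  rw [qblock_zero_one_entanglingRotation_conj_diagonal] at hnormal
  linear_combination (-25 / 12 : ℂ) * eq_zero_of_strictUpper_normal hnormal

theorem AbsolutelyZeroDiscord.diagonal_eq_smul_one {d : Fin 2 × Fin 2 → ℂ}
    (h : AbsolutelyZeroDiscord (diagonal d)) : diagonal d = d (0, 0) • 1 := by
  suffices ∀ k, d k = d (0, 0) by
    ext i j
    simp [diagonal_apply, one_apply, this]
  intro k
  obtain rfl | hk := eq_or_ne k (0, 0)
  · rfl
  have hfix : Equiv.swap (1, 1) k (0, 0) = (0, 0) :=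
    Equiv.swap_apply_of_ne_of_ne (by decide) hk.symm
  simpa [hfix] using (h.diagonal_comp_perm (Equiv.swap (1, 1) k)).diagonal_apply_eq.symm

theorem AbsolutelyZeroDiscord.eq_smul_one {ρ : Matrix (Fin 2 × Fin 2) (Fin 2 × Fin 2) ℂ}
    (hρ : ρ.IsHermitian) (h : AbsolutelyZeroDiscord ρ) : ∃ c : ℂ, ρ = c • 1 := by
  have hdiag := hρ.conjStarAlgAut_star_eigenvectorUnitary
  have hD : AbsolutelyZeroDiscord (diagonal (RCLike.ofReal ∘ hρ.eigenvalues)) := by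
    rw [← hdiag]
    exact h.unitary_conj (star hρ.eigenvectorUnitary).2
  refine ⟨hρ.eigenvalues (0, 0),
    EquivLike.injective (Unitary.conjStarAlgAut ℂ _ (star hρ.eigenvectorUnitary)) ?_⟩
  rw [hdiag, hD.diagonal_eq_smul_one, map_smul, map_one]
  rfl

theorem absolute_zero_discord (ρ : Matrix (Fin 2 × Fin 2) (Fin 2 × Fin 2) ℂ)
    (hρ : IsDensityMatrix ρ)
    (h : ∀ U ∈ Matrix.unitaryGroup (Fin 2 × Fin 2) ℂ,
      ZeroDiscordBlockCondition (U * ρ * Uᴴ)) :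
    ρ = (1 / 4 : ℂ) • (1 : Matrix (Fin 2 × Fin 2) (Fin 2 × Fin 2) ℂ) := by
  obtain ⟨hpsd, htrace⟩ := hρ
  obtain ⟨c, rfl⟩ := AbsolutelyZeroDiscord.eq_smul_one hpsd.isHermitian h
  have hc : c * 4 = 1 := by simpa using htrace
  rw [show c = 1 / 4 by linear_combination hc / 4]
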